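/- arXiv:1910.13183 — 5 statements merged into one kernel-verified Lean document; each statement's English description precedes it below -/
import Mathlib

section
/- Let X be a quasi-normed lattice. Then X is complete if and only if every positive increasing Cauchy sequence (x_n) in X has a supremum in X. -/
/-!
Completeness gives suprema: by monotonicity of the quasi-norm, a positive increasing sequence
converging to `l` has `l` as its least upper bound.

Conversely, pass to a subsequence `g` of a Cauchy sequence whose increments `u k` decay faster
than the factors `K ^ (k + 1)` accumulated by the quasi-triangle inequality. Then
`g n = g 0 + ∑ (u k)⁺ - ∑ (u k)⁻`, and both sums are positive increasing Cauchy sequences, hence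
have suprema `S` and `T`. It remains to see that such a sequence `y` converges to its supremum
`s`: after thinning it so that its increments `d k` decay fast enough, the series `∑ 2 ^ k • d k`
still has a supremum `Z`, and `s - y m ≤ 2⁻ᵐ • Z` along the thinned sequence.
-/

open Filter Finset Topology

lemma two_pow_nsmul_inv_two_pow_smul {X : Type*} [AddCommGroup X] [Module ℝ X] (m : ℕ) (x : X) :
    2 ^ m • ((2 : ℝ) ^ m)⁻¹ • x = x := by
  rw [← Nat.cast_smul_eq_nsmul ℝ, smul_smul]
  push_cast
  rw [mul_inv_cancel₀ (by positivity), one_smul]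

lemma Monotone.isLUB_range_comp {α β : Type*} [Preorder α] [Preorder β] {y : α → β}
    (hy : Monotone y) {j : ℕ → α} (hj : Tendsto j atTop atTop) {s : β}
    (hs : IsLUB (Set.range y) s) : IsLUB (Set.range (y ∘ j)) s := by
  rw [IsLUB, hy.upperBounds_range_comp_tendsto_atTop hj]
  exact hs

section LatticeOrderedGroup

variable {X : Type*} [Lattice X] [AddCommGroup X] [CovariantClass X X (· + ·) (· ≤ ·)]

lemma posPart_le_abs (a : X) : a⁺ ≤ |a| := sup_le (le_abs_self a) (abs_nonneg a)

lemma negPart_le_abs (a : X) : a⁻ ≤ |a| := sup_le (neg_le_abs a) (abs_nonneg a)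

-- No compatibility of the real scalar action with the order is assumed, so inequalities are
-- scaled only by natural multiples and transported back with this lemma.
lemma nonneg_of_two_pow_nsmul_nonneg {a : X} (m : ℕ) (h : 0 ≤ 2 ^ m • a) : 0 ≤ a := by
  induction m generalizing a with
  | zero => simpa using h
  | succ m ih => exact nsmul_two_semiclosed (ih (by rwa [← mul_nsmul, ← pow_succ']))

lemma monotone_partialSums {v : ℕ → X} (hv : ∀ k, 0 ≤ v k) :
    Monotone fun n => ∑ k ∈ range n, v k :=
  monotone_nat_of_le_succ fun n => by
    simpa only [sum_range_succ] using le_add_of_nonneg_right (hv n)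

lemma two_pow_nsmul_sub_le_sum {w : ℕ → X} (hw : Monotone w) (m p : ℕ) :
    2 ^ m • (w p - w m) ≤ ∑ k ∈ range p, 2 ^ k • (w (k + 1) - w k) := by
  have hd : ∀ k, 0 ≤ 2 ^ k • (w (k + 1) - w k) :=
    fun k => nsmul_nonneg (sub_nonneg.2 (hw k.le_succ)) _
  rcases le_total p m with hpm | hmp
  · exact (nsmul_nonpos (sub_nonpos.2 (hw hpm)) _).trans (sum_nonneg fun k _ => hd k)
  calc 2 ^ m • (w p - w m)
      = ∑ k ∈ Ico m p, 2 ^ m • (w (k + 1) - w k) := by rw [← smul_sum, sum_Ico_sub w hmp]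
    _ ≤ ∑ k ∈ Ico m p, 2 ^ k • (w (k + 1) - w k) :=
        sum_le_sum fun k hk => nsmul_le_nsmul_left (sub_nonneg.2 (hw k.le_succ))
          (Nat.pow_le_pow_right two_pos (mem_Ico.1 hk).1)
    _ ≤ ∑ k ∈ range p, 2 ^ k • (w (k + 1) - w k) :=
        sum_le_sum_of_subset_of_nonneg (fun k hk => mem_range.2 (mem_Ico.1 hk).2) fun k _ _ => hd k

variable [Module ℝ X]

lemma le_inv_two_pow_smul_of_two_pow_nsmul_le {a Z : X} {m : ℕ} (h : 2 ^ m • a ≤ Z) :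
    a ≤ ((2 : ℝ) ^ m)⁻¹ • Z :=
  sub_nonneg.1 <| nonneg_of_two_pow_nsmul_nonneg m <| by
    rwa [nsmul_sub, two_pow_nsmul_inv_two_pow_smul, sub_nonneg]

lemma sub_le_inv_two_pow_smul_of_isLUB {w : ℕ → X} {s Z : X} (hw : Monotone w)
    (hs : IsLUB (Set.range w) s) (hZ : ∀ p, ∑ k ∈ range p, 2 ^ k • (w (k + 1) - w k) ≤ Z)
    (m : ℕ) : s - w m ≤ ((2 : ℝ) ^ m)⁻¹ • Z :=
  sub_le_iff_le_add.2 <| hs.2 <| Set.forall_mem_range.2 fun p =>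
    sub_le_iff_le_add.1 <| le_inv_two_pow_smul_of_two_pow_nsmul_le <|
      (two_pow_nsmul_sub_le_sum hw m p).trans (hZ p)

end LatticeOrderedGroup

section QuasiNorm

variable {X : Type*} [AddCommGroup X] {N : X → ℝ} {K : ℝ}

def QCauchySeq (N : X → ℝ) (f : ℕ → X) : Prop :=
  ∀ ε : ℝ, 0 < ε → ∃ n₀, ∀ m ≥ n₀, ∀ n ≥ n₀, N (f m - f n) < ε

lemma QCauchySeq.exists_strictMono_lt {f : ℕ → X} (hf : QCauchySeq N f) {ε : ℕ → ℝ}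
    (hε : ∀ k, 0 < ε k) :
    ∃ j : ℕ → ℕ, StrictMono j ∧ ∀ k, N (f (j (k + 1)) - f (j k)) < ε k := by
  have hev : ∀ k, ∃ n₀, ∀ n ≥ n₀, ∀ m ≥ n, N (f m - f n) < ε k := fun k => by
    obtain ⟨n₀, h⟩ := hf _ (hε k)
    exact ⟨n₀, fun n hn m hm => h m (hn.trans hm) n hn⟩
  obtain ⟨j, hj, hP⟩ := extraction_forall_of_eventually' hev
  exact ⟨j, hj, fun k => hP k _ (hj k.lt_succ_self).le⟩

lemma QCauchySeq.tendsto_sub_comp (hnonneg : ∀ x, 0 ≤ N x) {f : ℕ → X} (hf : QCauchySeq N f)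
    {j : ℕ → ℕ} (hj : Tendsto j atTop atTop) :
    Tendsto (fun n => N (f n - f (j n))) atTop (𝓝 0) := by
  refine tendsto_order.2 ⟨fun a ha => .of_forall fun n => ha.trans_le (hnonneg _),
    fun ε hε => ?_⟩
  obtain ⟨n₀, h⟩ := hf ε hε
  filter_upwards [eventually_ge_atTop n₀, hj.eventually (eventually_ge_atTop n₀)]
    with n hn hjn using h n hn _ hjn

lemma tendsto_quasiNorm_add (hnonneg : ∀ x, 0 ≤ N x)
    (htri : ∀ x y, N (x + y) ≤ K * (N x + N y)) {a b : ℕ → X}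
    (ha : Tendsto (fun n => N (a n)) atTop (𝓝 0)) (hb : Tendsto (fun n => N (b n)) atTop (𝓝 0)) :
    Tendsto (fun n => N (a n + b n)) atTop (𝓝 0) :=
  squeeze_zero (fun _ => hnonneg _) (fun _ => htri _ _) (by simpa using (ha.add hb).const_mul K)

lemma QCauchySeq.tendsto_of_subseq (hnonneg : ∀ x, 0 ≤ N x)
    (htri : ∀ x y, N (x + y) ≤ K * (N x + N y)) {f : ℕ → X} (hf : QCauchySeq N f)
    {j : ℕ → ℕ} (hj : StrictMono j) {l : X} (hl : Tendsto (fun k => N (f (j k) - l)) atTop (𝓝 0)) :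
    Tendsto (fun n => N (f n - l)) atTop (𝓝 0) := by
  simpa using tendsto_quasiNorm_add hnonneg htri (hf.tendsto_sub_comp hnonneg hj.tendsto_atTop) hl

variable [Module ℝ X]

lemma quasiNorm_zero (hsmul : ∀ (a : ℝ) (x : X), N (a • x) = |a| * N x) : N 0 = 0 := by
  simpa using hsmul 0 0

lemma quasiNorm_neg (hsmul : ∀ (a : ℝ) (x : X), N (a • x) = |a| * N x) (x : X) :
    N (-x) = N x := by
  simpa using hsmul (-1) x

lemma quasiNorm_nsmul (hsmul : ∀ (a : ℝ) (x : X), N (a • x) = |a| * N x) (n : ℕ) (x : X) :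
    N (n • x) = n * N x := by
  rw [← Nat.cast_smul_eq_nsmul ℝ, hsmul, Nat.abs_cast]

lemma quasiNorm_sum_range_le (hK : 0 ≤ K) (hsmul : ∀ (a : ℝ) (x : X), N (a • x) = |a| * N x)
    (htri : ∀ x y, N (x + y) ≤ K * (N x + N y)) (a : ℕ → X) (n : ℕ) :
    N (∑ i ∈ range n, a i) ≤ ∑ i ∈ range n, K ^ (i + 1) * N (a i) := by
  induction n generalizing a with
  | zero => simp [quasiNorm_zero hsmul]
  | succ n ih =>
    rw [sum_range_succ', sum_range_succ']
    calc N (∑ i ∈ range n, a (i + 1) + a 0)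
        ≤ K * (N (∑ i ∈ range n, a (i + 1)) + N (a 0)) := htri _ _
      _ ≤ K * (∑ i ∈ range n, K ^ (i + 1) * N (a (i + 1)) + N (a 0)) := by
          gcongr; exact ih _
      _ = ∑ i ∈ range n, K ^ (i + 1 + 1) * N (a (i + 1)) + K ^ (0 + 1) * N (a 0) := by
          rw [mul_add, mul_sum]; simp only [pow_succ]; ring_nf

/-- The decay `(2 * K) ^ -(k + 1)` absorbs the weights of `quasiNorm_sum_range_le`, leaving a
geometric tail. -/
lemma quasiNorm_sum_Ico_le (hK : 1 ≤ K) (hnonneg : ∀ x, 0 ≤ N x)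
    (hsmul : ∀ (a : ℝ) (x : X), N (a • x) = |a| * N x)
    (htri : ∀ x y, N (x + y) ≤ K * (N x + N y)) {v : ℕ → X}
    (hv : ∀ k, N (v k) ≤ ((2 * K) ^ (k + 1))⁻¹) (m p : ℕ) :
    N (∑ k ∈ Ico m p, v k) ≤ (1 / 2) ^ m := by
  have hK0 : 0 < K := one_pos.trans_le hK
  rw [sum_Ico_eq_sum_range]
  calc N (∑ i ∈ range (p - m), v (m + i))
      ≤ ∑ i ∈ range (p - m), K ^ (i + 1) * N (v (m + i)) :=
        quasiNorm_sum_range_le hK0.le hsmul htri _ _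
    _ ≤ ∑ i ∈ range (p - m), (1 / 2) ^ (m + 1) * (1 / 2) ^ i := by
        refine sum_le_sum fun i _ => ?_
        calc K ^ (i + 1) * N (v (m + i)) ≤ K ^ (m + i + 1) * N (v (m + i)) :=
              mul_le_mul_of_nonneg_right (pow_le_pow_right₀ hK (by omega)) (hnonneg _)
          _ ≤ K ^ (m + i + 1) * ((2 * K) ^ (m + i + 1))⁻¹ := by gcongr; exact hv _
          _ = (1 / 2) ^ (m + 1) * (1 / 2) ^ i := by
              rw [← pow_add, mul_pow, one_div, inv_pow]
              field_simp
              ring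
    _ ≤ (1 / 2) ^ (m + 1) * 2 := by
        rw [← mul_sum]
        gcongr
        exact sum_geometric_two_le _
    _ = (1 / 2) ^ m := by ring

lemma qCauchySeq_partialSums (hK : 1 ≤ K) (hnonneg : ∀ x, 0 ≤ N x)
    (hsmul : ∀ (a : ℝ) (x : X), N (a • x) = |a| * N x)
    (htri : ∀ x y, N (x + y) ≤ K * (N x + N y)) {v : ℕ → X}
    (hv : ∀ k, N (v k) ≤ ((2 * K) ^ (k + 1))⁻¹) :
    QCauchySeq N fun n => ∑ k ∈ range n, v k := by
  intro ε hε
  obtain ⟨n₀, hn₀⟩ := exists_pow_lt_of_lt_one hε (by norm_num : (1 / 2 : ℝ) < 1)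
  have hle : ∀ m ≥ n₀, ∀ n ≥ m, N (∑ k ∈ range n, v k - ∑ k ∈ range m, v k) < ε :=
    fun m hm n hn => by
      rw [← sum_Ico_eq_sub _ hn]
      exact (quasiNorm_sum_Ico_le hK hnonneg hsmul htri hv m n).trans_lt
        ((pow_le_pow_of_le_one (by norm_num) (by norm_num) hm).trans_lt hn₀)
  refine ⟨n₀, fun m hm n hn => ?_⟩
  rcases le_total m n with hmn | hnm
  · rw [← quasiNorm_neg hsmul, neg_sub]
    exact hle m hm n hmn
  · exact hle n hn m hnm

lemma quasiNorm_two_pow_nsmul_le (hK : 0 < K) (hsmul : ∀ (a : ℝ) (x : X), N (a • x) = |a| * N x)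
    {d : X} {k : ℕ} (hd : N d ≤ ((4 * K) ^ (k + 1))⁻¹) :
    N (2 ^ k • d) ≤ ((2 * K) ^ (k + 1))⁻¹ := by
  rw [quasiNorm_nsmul hsmul]
  calc ((2 ^ k : ℕ) : ℝ) * N d ≤ 2 ^ k * ((4 * K) ^ (k + 1))⁻¹ := by push_cast; gcongr
    _ = ((2 * K) ^ (k + 1))⁻¹ / 2 := by
        rw [show (4 : ℝ) * K = 2 * (2 * K) by ring, mul_pow, pow_succ 2]
        field_simp
    _ ≤ ((2 * K) ^ (k + 1))⁻¹ := half_le_self (by positivity)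

end QuasiNorm

lemma eq_zero_of_abs_le_of_tendsto {X : Type*} [Lattice X] [AddGroup X] {N : X → ℝ}
    (hnonneg : ∀ x, 0 ≤ N x) (heq0 : ∀ x, N x = 0 ↔ x = 0)
    (hlat : ∀ x y : X, |x| ≤ |y| → N x ≤ N y) {a : X} {w : ℕ → X}
    (hw : Tendsto (fun n => N (w n)) atTop (𝓝 0)) (h : ∀ᶠ n in atTop, |a| ≤ |w n|) : a = 0 :=
  (heq0 a).1 <| le_antisymm (ge_of_tendsto hw (h.mono fun _ hn => hlat _ _ hn)) (hnonneg a)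

section QuasiNormedLattice

variable {X : Type*} [Lattice X] [AddCommGroup X] [CovariantClass X X (· + ·) (· ≤ ·)]
  {N : X → ℝ} {K : ℝ}

lemma quasiNorm_posPart_le (hlat : ∀ x y : X, |x| ≤ |y| → N x ≤ N y) (a : X) : N a⁺ ≤ N a :=
  hlat _ _ (by rw [abs_of_nonneg (posPart_nonneg a)]; exact posPart_le_abs a)

lemma quasiNorm_negPart_le (hlat : ∀ x y : X, |x| ≤ |y| → N x ≤ N y) (a : X) : N a⁻ ≤ N a :=
  hlat _ _ (by rw [abs_of_nonneg (negPart_nonneg a)]; exact negPart_le_abs a)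

lemma isLUB_range_of_tendsto (hnonneg : ∀ x, 0 ≤ N x) (heq0 : ∀ x, N x = 0 ↔ x = 0)
    (hlat : ∀ x y : X, |x| ≤ |y| → N x ≤ N y) {x : ℕ → X} (hx : Monotone x) {l : X}
    (hl : Tendsto (fun n => N (x n - l)) atTop (𝓝 0)) : IsLUB (Set.range x) l := by
  refine ⟨Set.forall_mem_range.2 fun n => ?_, fun b hb => ?_⟩
  · refine sub_nonpos.1 <| posPart_eq_zero.1 <| eq_zero_of_abs_le_of_tendsto hnonneg heq0 hlat hl ?_
    filter_upwards [eventually_ge_atTop n] with m hm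
    rw [abs_of_nonneg (posPart_nonneg _)]
    exact (posPart_mono (sub_le_sub_right (hx hm) l)).trans (posPart_le_abs _)
  · refine sub_nonpos.1 <| posPart_eq_zero.1 <|
      eq_zero_of_abs_le_of_tendsto hnonneg heq0 hlat hl (.of_forall fun n => ?_)
    rw [abs_of_nonneg (posPart_nonneg _), abs_sub_comm]
    exact (posPart_mono (sub_le_sub_left (hb (Set.mem_range_self n)) l)).trans (posPart_le_abs _)

def PosMonoCauchyHasLUB (N : X → ℝ) : Prop :=
  ∀ x : ℕ → X, (∀ n, 0 ≤ x n) → Monotone x → QCauchySeq N x → ∃ s, IsLUB (Set.range x) s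

variable [Module ℝ X]

lemma tendsto_sub_of_isLUB (H : PosMonoCauchyHasLUB N) (hK : 1 ≤ K) (hnonneg : ∀ x, 0 ≤ N x)
    (hsmul : ∀ (a : ℝ) (x : X), N (a • x) = |a| * N x)
    (htri : ∀ x y, N (x + y) ≤ K * (N x + N y)) (hlat : ∀ x y : X, |x| ≤ |y| → N x ≤ N y)
    {y : ℕ → X} (hy : Monotone y) (hc : QCauchySeq N y) {s : X} (hs : IsLUB (Set.range y) s) :
    Tendsto (fun n => N (y n - s)) atTop (𝓝 0) := by
  have hK0 : 0 < K := one_pos.trans_le hK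
  obtain ⟨j, hj, hjd⟩ :=
    hc.exists_strictMono_lt (ε := fun k => ((4 * K) ^ (k + 1))⁻¹) fun k => by positivity
  set w := y ∘ j
  have hw : Monotone w := hy.comp hj.monotone
  have hv0 : ∀ k, 0 ≤ 2 ^ k • (w (k + 1) - w k) :=
    fun k => nsmul_nonneg (sub_nonneg.2 (hw k.le_succ)) _
  obtain ⟨Z, hZ⟩ := H _ (fun n => sum_nonneg fun k _ => hv0 k) (monotone_partialSums hv0)
    (qCauchySeq_partialSums hK hnonneg hsmul htri fun k =>
      quasiNorm_two_pow_nsmul_le hK0 hsmul (hjd k).le)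
  have hws : ∀ m, w m ≤ s := fun m => hs.1 ⟨j m, rfl⟩
  have hbound : ∀ m, N (w m - s) ≤ ((2 : ℝ) ^ m)⁻¹ * N Z := fun m => by
    have hZ0 : 0 ≤ Z := by simpa using hZ.1 (Set.mem_range_self 0)
    have hle : s - w m ≤ ((2 : ℝ) ^ m)⁻¹ • Z := sub_le_inv_two_pow_smul_of_isLUB hw
      (hy.isLUB_range_comp hj.tendsto_atTop hs) (fun p => hZ.1 (Set.mem_range_self p)) m
    calc N (w m - s) = N (s - w m) := by rw [← quasiNorm_neg hsmul, neg_sub]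
      _ ≤ N (((2 : ℝ) ^ m)⁻¹ • Z) := hlat _ _ <| by
          rwa [abs_of_nonneg (sub_nonneg.2 (hws m)),
            abs_of_nonneg (le_inv_two_pow_smul_of_two_pow_nsmul_le (by simpa using hZ0))]
      _ = ((2 : ℝ) ^ m)⁻¹ * N Z := by rw [hsmul, abs_of_nonneg (by positivity)]
  refine hc.tendsto_of_subseq hnonneg htri hj (squeeze_zero (fun _ => hnonneg _) hbound ?_)
  simpa using (tendsto_inv_atTop_zero.comp
    (tendsto_pow_atTop_atTop_of_one_lt one_lt_two)).mul_const (N Z)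

lemma exists_tendsto_partialSums (H : PosMonoCauchyHasLUB N) (hK : 1 ≤ K)
    (hnonneg : ∀ x, 0 ≤ N x) (hsmul : ∀ (a : ℝ) (x : X), N (a • x) = |a| * N x)
    (htri : ∀ x y, N (x + y) ≤ K * (N x + N y)) (hlat : ∀ x y : X, |x| ≤ |y| → N x ≤ N y)
    {v : ℕ → X} (hv0 : ∀ k, 0 ≤ v k) (hv : ∀ k, N (v k) ≤ ((2 * K) ^ (k + 1))⁻¹) :
    ∃ S, Tendsto (fun n => N (∑ k ∈ range n, v k - S)) atTop (𝓝 0) := by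
  have hc := qCauchySeq_partialSums hK hnonneg hsmul htri hv
  obtain ⟨S, hS⟩ := H _ (fun n => sum_nonneg fun k _ => hv0 k) (monotone_partialSums hv0) hc
  exact ⟨S, tendsto_sub_of_isLUB H hK hnonneg hsmul htri hlat (monotone_partialSums hv0) hc hS⟩

lemma QCauchySeq.exists_tendsto (H : PosMonoCauchyHasLUB N) (hK : 1 ≤ K)
    (hnonneg : ∀ x, 0 ≤ N x) (hsmul : ∀ (a : ℝ) (x : X), N (a • x) = |a| * N x)
    (htri : ∀ x y, N (x + y) ≤ K * (N x + N y)) (hlat : ∀ x y : X, |x| ≤ |y| → N x ≤ N y)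
    {f : ℕ → X} (hf : QCauchySeq N f) : ∃ l, Tendsto (fun n => N (f n - l)) atTop (𝓝 0) := by
  have hK0 : 0 < K := one_pos.trans_le hK
  obtain ⟨j, hj, hju⟩ :=
    hf.exists_strictMono_lt (ε := fun k => ((2 * K) ^ (k + 1))⁻¹) fun k => by positivity
  set u := fun k => f (j (k + 1)) - f (j k)
  obtain ⟨S, hS⟩ := exists_tendsto_partialSums H hK hnonneg hsmul htri hlat
    (fun k => posPart_nonneg (u k)) fun k => (quasiNorm_posPart_le hlat _).trans (hju k).le
  obtain ⟨T, hT⟩ := exists_tendsto_partialSums H hK hnonneg hsmul htri hlat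
    (fun k => negPart_nonneg (u k)) fun k => (quasiNorm_negPart_le hlat _).trans (hju k).le
  have hsplit : ∀ n, f (j n) - (f (j 0) + (S - T)) =
      (∑ k ∈ range n, (u k)⁺ - S) + -(∑ k ∈ range n, (u k)⁻ - T) := fun n => by
    have htel : ∑ k ∈ range n, (u k)⁺ - ∑ k ∈ range n, (u k)⁻ = f (j n) - f (j 0) := by
      rw [← sum_sub_distrib]
      simp only [posPart_sub_negPart]
      exact sum_range_sub (fun k => f (j k)) n
    rw [← sub_add_cancel (f (j n)) (f (j 0)), ← htel]
    abel
  refine ⟨f (j 0) + (S - T), hf.tendsto_of_subseq hnonneg htri hj ?_⟩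
  simp_rw [hsplit]
  exact tendsto_quasiNorm_add hnonneg htri hS (by simpa only [quasiNorm_neg hsmul] using hT)

end QuasiNormedLattice

/-- **Amemiya's theorem for quasi-normed lattices.** A quasi-normed lattice `X`
is complete iff every positive increasing Cauchy sequence in `X` has a
supremum in `X`. -/
theorem stmt_1 {X : Type*} [Lattice X] [AddCommGroup X]
    [CovariantClass X X (· + ·) (· ≤ ·)] [Module ℝ X]
    (N : X → ℝ) (K : ℝ) (hK : 1 ≤ K)
    (hnonneg : ∀ x, 0 ≤ N x)
    (heq0 : ∀ x, N x = 0 ↔ x = 0)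
    (hsmul : ∀ (a : ℝ) (x : X), N (a • x) = |a| * N x)
    (htri : ∀ x y, N (x + y) ≤ K * (N x + N y))
    (hlat : ∀ x y : X, |x| ≤ |y| → N x ≤ N y) :
    (∀ f : ℕ → X,
        (∀ ε : ℝ, 0 < ε → ∃ n₀, ∀ m ≥ n₀, ∀ n ≥ n₀, N (f m - f n) < ε) →
        ∃ l : X, Tendsto (fun n => N (f n - l)) atTop (nhds 0)) ↔
    (∀ x : ℕ → X, (∀ n, 0 ≤ x n) → Monotone x →
        (∀ ε : ℝ, 0 < ε → ∃ n₀, ∀ m ≥ n₀, ∀ n ≥ n₀, N (x m - x n) < ε) →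
        ∃ s : X, IsLUB (Set.range x) s) := by
  refine ⟨fun hcomplete x _ hx hc => ?_,
    fun H f hf => QCauchySeq.exists_tendsto H hK hnonneg hsmul htri hlat hf⟩
  obtain ⟨l, hl⟩ := hcomplete x hc
  exact ⟨l, isLUB_range_of_tendsto hnonneg heq0 hlat hx hl⟩
end

section
/- Let Φ be a Young function and X a quasi-normed function space over μ with quasi-triangle constant K. Then the Luxemburg functional ‖f‖_{X^Φ} := inf{ k > 0 : Φ(|f|/k) ∈ X and ‖Φ(|f|/k)‖_X ≤ 1 } is a quasi-norm on X^Φ with the same quasi-triangle constant K, and X^Φ with this quasi-norm is a quasi-normed function space over μ. If ‖·‖_X is a norm, then ‖·‖_{X^Φ} is a norm. -/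
open MeasureTheory Filter Set

/-- A Young function: strictly increasing, continuous, convex on `[0,∞)`,
vanishing at `0` and tending to infinity. -/
structure IsYoung (Φ : ℝ → ℝ) : Prop where
  strictMono : StrictMonoOn Φ (Set.Ici 0)
  continuous : ContinuousOn Φ (Set.Ici 0)
  convex : ConvexOn ℝ (Set.Ici 0) Φ
  map_zero : Φ 0 = 0
  tendsto_atTop : Tendsto Φ atTop atTop

/-- A quasi-normed function space over `μ` with quasi-triangle constant `K`:
an ideal of measurable functions (modulo a.e. equality) containing the
constant function `1`, equipped with a lattice quasi-norm. -/
structure QNFS {α : Type*} [MeasurableSpace α] (μ : Measure α) (K : ℝ) where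
  mem : (α → ℝ) → Prop
  nrm : (α → ℝ) → ℝ
  one_le_K : 1 ≤ K
  nrm_nonneg : ∀ f, 0 ≤ nrm f
  nrm_eq_zero : ∀ f, mem f → (nrm f = 0 ↔ f =ᵐ[μ] 0)
  add_mem : ∀ f g, mem f → mem g → mem (f + g)
  smul_mem : ∀ (c : ℝ) (f), mem f → mem (c • f)
  nrm_smul : ∀ (c : ℝ) (f), mem f → nrm (c • f) = |c| * nrm f
  nrm_add_le : ∀ f g, mem f → mem g → nrm (f + g) ≤ K * (nrm f + nrm g)
  ideal_mem : ∀ f g, mem g → (∀ᵐ x ∂μ, |f x| ≤ |g x|) → mem f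
  ideal_nrm : ∀ f g, mem f → mem g → (∀ᵐ x ∂μ, |f x| ≤ |g x|) → nrm f ≤ nrm g
  const_one_mem : mem (fun _ => (1 : ℝ))

variable {α : Type*} [MeasurableSpace α]

/-- Membership in the Orlicz class `X̃^Φ`. -/
def memClass {μ : Measure α} {K : ℝ} (Φ : ℝ → ℝ) (X : QNFS μ K) (f : α → ℝ) : Prop :=
  X.mem (fun x => Φ |f x|)

/-- Membership in the Orlicz space `X^Φ`. -/
def memOrlicz {μ : Measure α} {K : ℝ} (Φ : ℝ → ℝ) (X : QNFS μ K) (f : α → ℝ) : Prop :=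
  ∃ c > 0, X.mem (fun x => Φ (|f x| / c))

/-- The Luxemburg quasi-norm on `X^Φ`. -/
noncomputable def lux {μ : Measure α} {K : ℝ} (Φ : ℝ → ℝ) (X : QNFS μ K) (f : α → ℝ) : ℝ :=
  sInf {k : ℝ | 0 < k ∧ X.mem (fun x => Φ (|f x| / k)) ∧
    X.nrm (fun x => Φ (|f x| / k)) ≤ 1}

/-!
Everything is read off the set `luxSet Φ X f` of admissible `k`, whose infimum is `lux Φ X f`.
Since `Φ` is convex with `Φ 0 = 0`, `Φ (s / l) ≤ Φ s / l` for `l ≥ 1`, so a large multiple of any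
`c` witnessing `memOrlicz` is admissible. Scaling `f` by `c` scales the admissible set by `|c|`.
If `a` is admissible for `f` and `b` for `g`, convexity gives
`Φ (|f + g| / (a + b)) ≤ (a Φ (|f| / a) + b Φ (|g| / b)) / (a + b)` pointwise, and the extra
factor `K ≥ 1` absorbs the quasi-triangle constant of `X`, so `K (a + b)` is admissible for
`f + g`. Finally, `Φ (t / k) 1_{t ≤ |f|} ≤ Φ (|f| / k)`, so if admissible `k` tend to `0` then
`Φ (t / k) → ∞` forces `‖1_{t ≤ |f|}‖_X = 0` for every `t > 0`, i.e. `f = 0` a.e.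
-/

namespace IsYoung

variable {Φ : ℝ → ℝ}

lemma nonneg (hΦ : IsYoung Φ) {t : ℝ} (ht : 0 ≤ t) : 0 ≤ Φ t :=
  hΦ.map_zero ▸ hΦ.strictMono.monotoneOn self_mem_Ici ht ht

lemma mono (hΦ : IsYoung Φ) {s t : ℝ} (hs : 0 ≤ s) (hst : s ≤ t) : Φ s ≤ Φ t :=
  hΦ.strictMono.monotoneOn hs (hs.trans hst) hst

lemma map_mul_le (hΦ : IsYoung Φ) {θ t : ℝ} (ht : 0 ≤ t) (hθ₀ : 0 ≤ θ) (hθ₁ : θ ≤ 1) :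
    Φ (θ * t) ≤ θ * Φ t := by
  simpa [hΦ.map_zero] using
    hΦ.convex.2 ht self_mem_Ici hθ₀ (sub_nonneg.2 hθ₁) (add_sub_cancel θ 1)

lemma map_div_le (hΦ : IsYoung Φ) {t C : ℝ} (ht : 0 ≤ t) (hC : 1 ≤ C) : Φ (t / C) ≤ Φ t / C := by
  simpa [div_eq_inv_mul] using
    hΦ.map_mul_le ht (inv_nonneg.2 (zero_le_one.trans hC)) (inv_le_one_of_one_le₀ hC)

lemma map_abs_add_div_le (hΦ : IsYoung Φ) (s t : ℝ) {a b C : ℝ} (ha : 0 < a) (hb : 0 < b)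
    (hC : 1 ≤ C) :
    Φ (|s + t| / (C * (a + b))) ≤
      (a / (a + b) * Φ (|s| / a) + b / (a + b) * Φ (|t| / b)) / C := by
  have hab : 0 < a + b := add_pos ha hb
  have hsplit : (|s| + |t|) / (a + b) = a / (a + b) * (|s| / a) + b / (a + b) * (|t| / b) := by
    field_simp
  calc Φ (|s + t| / (C * (a + b))) = Φ (|s + t| / (a + b) / C) := by rw [div_div, mul_comm]
    _ ≤ Φ (|s + t| / (a + b)) / C := hΦ.map_div_le (by positivity) hC
    _ ≤ Φ ((|s| + |t|) / (a + b)) / C := by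
        gcongr
        exact hΦ.mono (by positivity) (by gcongr; exact abs_add_le s t)
    _ ≤ _ := by
        rw [hsplit]
        gcongr
        exact hΦ.convex.2 (by positivity : 0 ≤ |s| / a) (by positivity : 0 ≤ |t| / b)
          (by positivity) (by positivity) (by field_simp)

end IsYoung

namespace QNFS

variable {μ : Measure α} {K : ℝ} (X : QNFS μ K)

lemma mem_of_le {f g : α → ℝ} (hg : X.mem g) (hf₀ : ∀ᵐ x ∂μ, 0 ≤ f x)
    (hfg : ∀ᵐ x ∂μ, f x ≤ g x) : X.mem f :=
  X.ideal_mem f g hg <| by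
    filter_upwards [hf₀, hfg] with x h₀ h
    rw [abs_of_nonneg h₀, abs_of_nonneg (h₀.trans h)]
    exact h

lemma nrm_le_of_le {f g : α → ℝ} (hg : X.mem g) (hf₀ : ∀ᵐ x ∂μ, 0 ≤ f x)
    (hfg : ∀ᵐ x ∂μ, f x ≤ g x) : X.nrm f ≤ X.nrm g :=
  X.ideal_nrm f g (X.mem_of_le hg hf₀ hfg) hg <| by
    filter_upwards [hf₀, hfg] with x h₀ h
    rw [abs_of_nonneg h₀, abs_of_nonneg (h₀.trans h)]
    exact h

lemma mem_indicator_one (s : Set α) : X.mem (s.indicator 1) :=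
  X.mem_of_le X.const_one_mem (.of_forall fun _ => indicator_nonneg (fun _ _ => zero_le_one) _)
    (.of_forall fun _ => indicator_le_self' (fun _ _ => zero_le_one) _)

lemma mem_zero : X.mem 0 :=
  X.mem_of_le X.const_one_mem (.of_forall fun _ => le_rfl) (.of_forall fun _ => zero_le_one)

lemma nrm_zero : X.nrm 0 = 0 :=
  (X.nrm_eq_zero 0 X.mem_zero).2 EventuallyEq.rfl

end QNFS

lemma ae_eq_zero_of_forall_ae_abs_lt {μ : Measure α} {f : α → ℝ}
    (h : ∀ t > 0, ∀ᵐ x ∂μ, |f x| < t) : f =ᵐ[μ] 0 := by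
  have hall : ∀ᵐ x ∂μ, ∀ n : ℕ, |f x| < 1 / (n + 1) :=
    ae_all_iff.2 fun n => h _ Nat.one_div_pos_of_nat
  filter_upwards [hall] with x hx
  exact abs_nonpos_iff.1 (ge_of_tendsto' tendsto_one_div_add_atTop_nhds_zero_nat fun n => (hx n).le)

section Luxemburg

open Pointwise Topology

variable {μ : Measure α} {K : ℝ}

def luxSet (Φ : ℝ → ℝ) (X : QNFS μ K) (f : α → ℝ) : Set ℝ :=
  {k : ℝ | 0 < k ∧ X.mem (fun x => Φ (|f x| / k)) ∧ X.nrm (fun x => Φ (|f x| / k)) ≤ 1}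

variable {Φ : ℝ → ℝ} (X : QNFS μ K)

lemma lux_eq_sInf_luxSet (f : α → ℝ) : lux Φ X f = sInf (luxSet Φ X f) := rfl

lemma bddBelow_luxSet (f : α → ℝ) : BddBelow (luxSet Φ X f) := ⟨0, fun _ hk => hk.1.le⟩

lemma lux_nonneg (f : α → ℝ) : 0 ≤ lux Φ X f := Real.sInf_nonneg fun _ hk => hk.1.le

lemma mul_mem_luxSet (hΦ : IsYoung Φ) {f : α → ℝ} {c l : ℝ} (hc : 0 < c)
    (hmem : X.mem (fun x => Φ (|f x| / c))) (hl : 1 ≤ l)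
    (hnrm : X.nrm (fun x => Φ (|f x| / c)) ≤ l) : l * c ∈ luxSet Φ X f := by
  set u : α → ℝ := fun x => Φ (|f x| / c)
  have hl₀ : 0 < l := zero_lt_one.trans_le hl
  have h₀ : ∀ x, 0 ≤ Φ (|f x| / (l * c)) := fun x => hΦ.nonneg (by positivity)
  have hle : ∀ x, Φ (|f x| / (l * c)) ≤ (l⁻¹ • u) x := fun x => by
    rw [mul_comm, ← div_div, Pi.smul_apply, smul_eq_mul, ← div_eq_inv_mul]
    exact hΦ.map_div_le (by positivity) hl
  have hmem' : X.mem (l⁻¹ • u) := X.smul_mem l⁻¹ u hmem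
  refine ⟨by positivity, X.mem_of_le hmem' (.of_forall h₀) (.of_forall hle), ?_⟩
  calc X.nrm _ ≤ X.nrm (l⁻¹ • u) := X.nrm_le_of_le hmem' (.of_forall h₀) (.of_forall hle)
    _ = l⁻¹ * X.nrm u := by rw [X.nrm_smul _ _ hmem, abs_of_pos (inv_pos.2 hl₀)]
    _ ≤ 1 := inv_mul_le_one_of_le₀ hnrm hl₀.le

lemma luxSet_nonempty (hΦ : IsYoung Φ) {f : α → ℝ} (hf : memOrlicz Φ X f) :
    (luxSet Φ X f).Nonempty :=
  let ⟨_, hc, hmem⟩ := hf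
  ⟨_, mul_mem_luxSet X hΦ hc hmem (le_max_left 1 _) (le_max_right _ _)⟩

lemma luxSet_subset_of_ae_abs_le (hΦ : IsYoung Φ) {f g : α → ℝ}
    (hfg : ∀ᵐ x ∂μ, |f x| ≤ |g x|) : luxSet Φ X g ⊆ luxSet Φ X f := by
  rintro k ⟨hk, hmem, hnrm⟩
  have h₀ : ∀ᵐ x ∂μ, 0 ≤ Φ (|f x| / k) := .of_forall fun x => hΦ.nonneg (by positivity)
  have hle : ∀ᵐ x ∂μ, Φ (|f x| / k) ≤ Φ (|g x| / k) := by
    filter_upwards [hfg] with x hx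
    exact hΦ.mono (by positivity) (by gcongr)
  exact ⟨hk, X.mem_of_le hmem h₀ hle, (X.nrm_le_of_le hmem h₀ hle).trans hnrm⟩

lemma memOrlicz_of_ae_abs_le (hΦ : IsYoung Φ) {f g : α → ℝ} (hg : memOrlicz Φ X g)
    (hfg : ∀ᵐ x ∂μ, |f x| ≤ |g x|) : memOrlicz Φ X f :=
  let ⟨k, hk⟩ := luxSet_nonempty X hΦ hg
  let ⟨hk₀, hmem, _⟩ := luxSet_subset_of_ae_abs_le X hΦ hfg hk
  ⟨k, hk₀, hmem⟩

lemma lux_le_lux_of_ae_abs_le (hΦ : IsYoung Φ) {f g : α → ℝ} (hg : memOrlicz Φ X g)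
    (hfg : ∀ᵐ x ∂μ, |f x| ≤ |g x|) : lux Φ X f ≤ lux Φ X g :=
  csInf_le_csInf (bddBelow_luxSet X f) (luxSet_nonempty X hΦ hg)
    (luxSet_subset_of_ae_abs_le X hΦ hfg)

lemma luxSet_eq_Ioi_of_ae_eq_zero (hΦ : IsYoung Φ) {f : α → ℝ} (hf : f =ᵐ[μ] 0) :
    luxSet Φ X f = Ioi 0 := by
  refine Subset.antisymm (fun _ hk => hk.1) fun k hk => ?_
  have hzero : (fun x => Φ (|f x| / k)) =ᵐ[μ] 0 := by
    filter_upwards [hf] with x hx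
    simp [hx, hΦ.map_zero]
  have h₀ := hzero.mono fun _ hx => hx.ge
  have hle := hzero.mono fun _ hx => hx.le
  refine ⟨hk, X.mem_of_le X.mem_zero h₀ hle, ?_⟩
  calc X.nrm _ ≤ X.nrm 0 := X.nrm_le_of_le X.mem_zero h₀ hle
    _ ≤ 1 := X.nrm_zero.trans_le zero_le_one

lemma lux_eq_zero_of_ae_eq_zero (hΦ : IsYoung Φ) {f : α → ℝ} (hf : f =ᵐ[μ] 0) :
    lux Φ X f = 0 := by
  rw [lux_eq_sInf_luxSet, luxSet_eq_Ioi_of_ae_eq_zero X hΦ hf, csInf_Ioi]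

lemma mul_nrm_indicator_le_one (hΦ : IsYoung Φ) {f : α → ℝ} {k t : ℝ}
    (hk : k ∈ luxSet Φ X f) (ht : 0 ≤ t) :
    Φ (t / k) * X.nrm ({x | t ≤ |f x|}.indicator 1) ≤ 1 := by
  obtain ⟨hk, hmem, hnrm⟩ := hk
  set A : Set α := {x | t ≤ |f x|}
  have hΦt : 0 ≤ Φ (t / k) := hΦ.nonneg (by positivity)
  have h₀ : ∀ x, 0 ≤ (Φ (t / k) • A.indicator (1 : α → ℝ)) x := fun x =>
    mul_nonneg hΦt (indicator_nonneg (fun _ _ => zero_le_one) x)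
  have hle : ∀ x, (Φ (t / k) • A.indicator (1 : α → ℝ)) x ≤ Φ (|f x| / k) := fun x => by
    by_cases hx : x ∈ A
    · simpa [hx] using hΦ.mono (by positivity) (div_le_div_of_nonneg_right hx hk.le)
    · simpa [hx] using hΦ.nonneg (by positivity)
  calc Φ (t / k) * X.nrm (A.indicator 1) = X.nrm (Φ (t / k) • A.indicator 1) := by
        rw [X.nrm_smul _ _ (X.mem_indicator_one A), abs_of_nonneg hΦt]
    _ ≤ X.nrm (fun x => Φ (|f x| / k)) := X.nrm_le_of_le hmem (.of_forall h₀) (.of_forall hle)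
    _ ≤ 1 := hnrm

lemma ae_abs_lt_of_lux_eq_zero (hΦ : IsYoung Φ) {f : α → ℝ} (hf : memOrlicz Φ X f)
    (hlux : lux Φ X f = 0) {t : ℝ} (ht : 0 < t) : ∀ᵐ x ∂μ, |f x| < t := by
  set A : Set α := {x | t ≤ |f x|}
  obtain ⟨k, -, hk_lim, hk_mem⟩ :=
    exists_seq_tendsto_sInf (luxSet_nonempty X hΦ hf) (bddBelow_luxSet X f)
  rw [← lux_eq_sInf_luxSet, hlux] at hk_lim
  have hk_pos : Tendsto k atTop (𝓝[>] 0) :=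
    tendsto_nhdsWithin_iff.2 ⟨hk_lim, .of_forall fun n => (hk_mem n).1⟩
  have hΦ_lim : Tendsto (fun n => Φ (t / k n)) atTop atTop := by
    simp only [div_eq_mul_inv]
    exact hΦ.tendsto_atTop.comp ((tendsto_inv_nhdsGT_zero.comp hk_pos).const_mul_atTop ht)
  have hnrm_le : ∀ᶠ n in atTop, X.nrm (A.indicator 1) ≤ (Φ (t / k n))⁻¹ :=
    (hΦ_lim.eventually_gt_atTop 0).mono fun n hn =>
      ((le_inv_mul_iff₀ hn).2 (mul_nrm_indicator_le_one X hΦ (hk_mem n) ht.le)).trans_eq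
        (mul_one _)
  have hnrm : X.nrm (A.indicator 1) = 0 :=
    le_antisymm (ge_of_tendsto (tendsto_inv_atTop_zero.comp hΦ_lim) hnrm_le) (X.nrm_nonneg _)
  filter_upwards [(X.nrm_eq_zero _ (X.mem_indicator_one A)).1 hnrm] with x hx
  by_contra h
  simp [A, not_lt.1 h] at hx

lemma luxSet_smul {c : ℝ} (hc : c ≠ 0) (f : α → ℝ) :
    luxSet Φ X (c • f) = |c| • luxSet Φ X f := by
  ext k
  have hc' : 0 < |c| := abs_pos.2 hc
  have hrescale : (fun x => Φ (|(c • f) x| / k)) = fun x => Φ (|f x| / (|c|⁻¹ * k)) := by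
    funext x
    rw [Pi.smul_apply, smul_eq_mul, abs_mul]
    field_simp
  rw [mem_smul_set_iff_inv_smul_mem₀ hc'.ne', smul_eq_mul]
  change _ ∧ _ ∧ _ ↔ _ ∧ _ ∧ _
  rw [hrescale, mul_pos_iff_of_pos_left (inv_pos.2 hc')]

lemma lux_smul (hΦ : IsYoung Φ) (c : ℝ) (f : α → ℝ) : lux Φ X (c • f) = |c| * lux Φ X f := by
  rcases eq_or_ne c 0 with rfl | hc
  · rw [zero_smul, abs_zero, zero_mul]
    exact lux_eq_zero_of_ae_eq_zero X hΦ EventuallyEq.rfl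
  · rw [lux_eq_sInf_luxSet, lux_eq_sInf_luxSet, luxSet_smul X hc,
      Real.sInf_smul_of_nonneg (abs_nonneg c), smul_eq_mul]

lemma mul_add_mem_luxSet (hΦ : IsYoung Φ) {C : ℝ} (hC : 1 ≤ C)
    (hX : ∀ u v, X.mem u → X.mem v → X.nrm (u + v) ≤ C * (X.nrm u + X.nrm v))
    {f g : α → ℝ} {a b : ℝ} (ha : a ∈ luxSet Φ X f) (hb : b ∈ luxSet Φ X g) :
    C * (a + b) ∈ luxSet Φ X (f + g) := by
  obtain ⟨ha, hu_mem, hu_nrm⟩ := ha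
  obtain ⟨hb, hv_mem, hv_nrm⟩ := hb
  set u : α → ℝ := fun x => Φ (|f x| / a)
  set v : α → ℝ := fun x => Φ (|g x| / b)
  have hC₀ : 0 < C := zero_lt_one.trans_le hC
  have hab : 0 < a + b := add_pos ha hb
  have hu'_mem := X.smul_mem (a / (a + b)) u hu_mem
  have hv'_mem := X.smul_mem (b / (a + b)) v hv_mem
  set w : α → ℝ := C⁻¹ • ((a / (a + b)) • u + (b / (a + b)) • v)
  have hw_mem : X.mem w := X.smul_mem _ _ (X.add_mem _ _ hu'_mem hv'_mem)
  have h₀ : ∀ x, 0 ≤ Φ (|(f + g) x| / (C * (a + b))) := fun x => hΦ.nonneg (by positivity)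
  have hle : ∀ x, Φ (|(f + g) x| / (C * (a + b))) ≤ w x := fun x => by
    refine (hΦ.map_abs_add_div_le (f x) (g x) ha hb hC).trans_eq ?_
    simp only [w, u, v, Pi.add_apply, Pi.smul_apply, smul_eq_mul]
    ring
  have hw_nrm : X.nrm w ≤ 1 :=
    calc X.nrm w = C⁻¹ * X.nrm ((a / (a + b)) • u + (b / (a + b)) • v) := by
          rw [X.nrm_smul _ _ (X.add_mem _ _ hu'_mem hv'_mem), abs_of_pos (inv_pos.2 hC₀)]
      _ ≤ C⁻¹ * (C * (a / (a + b) * X.nrm u + b / (a + b) * X.nrm v)) := by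
          gcongr
          simpa [X.nrm_smul _ _ hu_mem, X.nrm_smul _ _ hv_mem, abs_of_pos (div_pos ha hab),
            abs_of_pos (div_pos hb hab)] using hX _ _ hu'_mem hv'_mem
      _ ≤ C⁻¹ * (C * (a / (a + b) * 1 + b / (a + b) * 1)) := by gcongr
      _ = 1 := by field_simp
  exact ⟨by positivity, X.mem_of_le hw_mem (.of_forall h₀) (.of_forall hle),
    (X.nrm_le_of_le hw_mem (.of_forall h₀) (.of_forall hle)).trans hw_nrm⟩

lemma lux_add_le (hΦ : IsYoung Φ) {C : ℝ} (hC : 1 ≤ C)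
    (hX : ∀ u v, X.mem u → X.mem v → X.nrm (u + v) ≤ C * (X.nrm u + X.nrm v))
    {f g : α → ℝ} (hf : memOrlicz Φ X f) (hg : memOrlicz Φ X g) :
    lux Φ X (f + g) ≤ C * (lux Φ X f + lux Φ X g) := by
  have hsub : C • (luxSet Φ X f + luxSet Φ X g) ⊆ luxSet Φ X (f + g) := by
    rintro _ ⟨_, ⟨a, ha, b, hb, rfl⟩, rfl⟩
    exact mul_add_mem_luxSet X hΦ hC hX ha hb
  have hf' := luxSet_nonempty X hΦ hf
  have hg' := luxSet_nonempty X hΦ hg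
  calc lux Φ X (f + g) ≤ sInf (C • (luxSet Φ X f + luxSet Φ X g)) :=
        csInf_le_csInf (bddBelow_luxSet X _) (hf'.add hg').smul_set hsub
    _ = C * (lux Φ X f + lux Φ X g) := by
        rw [Real.sInf_smul_of_nonneg (zero_le_one.trans hC),
          csInf_add hf' (bddBelow_luxSet X f) hg' (bddBelow_luxSet X g)]
        rfl

lemma memOrlicz_one : memOrlicz Φ X (fun _ => 1) :=
  ⟨1, one_pos, by simpa [Pi.smul_def] using X.smul_mem (Φ 1) _ X.const_one_mem⟩

end Luxemburg

theorem stmt_7_general {μ : Measure α} {K : ℝ}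
    (Φ : ℝ → ℝ) (hΦ : IsYoung Φ) (X : QNFS μ K) :
    (∀ f : α → ℝ, memOrlicz Φ X f → 0 ≤ lux Φ X f) ∧
    (∀ f : α → ℝ, memOrlicz Φ X f → (lux Φ X f = 0 ↔ f =ᵐ[μ] 0)) ∧
    (∀ (c : ℝ) (f : α → ℝ), memOrlicz Φ X f →
      lux Φ X (c • f) = |c| * lux Φ X f) ∧
    (∀ f g : α → ℝ, memOrlicz Φ X f → memOrlicz Φ X g →
      lux Φ X (f + g) ≤ K * (lux Φ X f + lux Φ X g)) ∧
    (∀ f g : α → ℝ, memOrlicz Φ X g → (∀ᵐ x ∂μ, |f x| ≤ |g x|) →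
      memOrlicz Φ X f ∧ lux Φ X f ≤ lux Φ X g) ∧
    (memOrlicz Φ X (fun _ => (1 : ℝ))) ∧
    ((∀ f g : α → ℝ, X.mem f → X.mem g → X.nrm (f + g) ≤ X.nrm f + X.nrm g) →
      ∀ f g : α → ℝ, memOrlicz Φ X f → memOrlicz Φ X g →
        lux Φ X (f + g) ≤ lux Φ X f + lux Φ X g) := by
  refine ⟨fun f _ => lux_nonneg X f,
    fun f hf => ⟨fun h => ae_eq_zero_of_forall_ae_abs_lt fun _ ht =>
      ae_abs_lt_of_lux_eq_zero X hΦ hf h ht, lux_eq_zero_of_ae_eq_zero X hΦ⟩,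
    fun c f _ => lux_smul X hΦ c f,
    fun f g hf hg => lux_add_le X hΦ X.one_le_K X.nrm_add_le hf hg,
    fun f g hg hfg => ⟨memOrlicz_of_ae_abs_le X hΦ hg hfg, lux_le_lux_of_ae_abs_le X hΦ hg hfg⟩,
    memOrlicz_one X, fun hX f g hf hg => ?_⟩
  simpa using lux_add_le X hΦ le_rfl (fun u v hu hv => by simpa using hX u v hu hv) hf hg

/-- The Luxemburg functional is a quasi-norm on `X^Φ` with the same
quasi-triangle constant `K`, and `X^Φ` is a quasi-normed function space over
`μ`; if the quasi-norm of `X` is a norm, the Luxemburg functional is a norm. -/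
theorem stmt_7 {μ : Measure α} [IsFiniteMeasure μ] {K : ℝ}
    (Φ : ℝ → ℝ) (hΦ : IsYoung Φ) (X : QNFS μ K) :
    (∀ f : α → ℝ, memOrlicz Φ X f → 0 ≤ lux Φ X f) ∧
    (∀ f : α → ℝ, memOrlicz Φ X f → (lux Φ X f = 0 ↔ f =ᵐ[μ] 0)) ∧
    (∀ (c : ℝ) (f : α → ℝ), memOrlicz Φ X f →
      lux Φ X (c • f) = |c| * lux Φ X f) ∧
    (∀ f g : α → ℝ, memOrlicz Φ X f → memOrlicz Φ X g →
      lux Φ X (f + g) ≤ K * (lux Φ X f + lux Φ X g)) ∧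
    (∀ f g : α → ℝ, memOrlicz Φ X g → (∀ᵐ x ∂μ, |f x| ≤ |g x|) →
      memOrlicz Φ X f ∧ lux Φ X f ≤ lux Φ X g) ∧
    (memOrlicz Φ X (fun _ => (1 : ℝ))) ∧
    ((∀ f g : α → ℝ, X.mem f → X.mem g → X.nrm (f + g) ≤ X.nrm f + X.nrm g) →
      ∀ f g : α → ℝ, memOrlicz Φ X f → memOrlicz Φ X g →
        lux Φ X (f + g) ≤ lux Φ X f + lux Φ X g) :=
  stmt_7_general Φ hΦ X
end

section
/- Let Φ be a Young function and X a quasi-normed function space over μ. If H ⊆ X^Φ is bounded in the Luxemburg quasi-norm, then there exists a Young function Ψ such that { Ψ(|h|) : h ∈ H } is bounded in X. -/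
open MeasureTheory Filter Set

variable {α : Type*} [MeasurableSpace α]

/-- If `H ⊆ X^Φ` is bounded in the Luxemburg quasi-norm, then there is a
Young function `Ψ` such that `{Ψ(|h|) : h ∈ H}` is bounded in `X`. -/
theorem stmt_13 {μ : Measure α} [IsFiniteMeasure μ] {K : ℝ}
    (Φ : ℝ → ℝ) (hΦ : IsYoung Φ) (X : QNFS μ K) (H : Set (α → ℝ))
    (hH : ∀ h ∈ H, memOrlicz Φ X h)
    (hbdd : ∃ M : ℝ, ∀ h ∈ H, lux Φ X h ≤ M) :
    ∃ Ψ : ℝ → ℝ, IsYoung Ψ ∧ ∃ M : ℝ, ∀ h ∈ H,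
      memClass Ψ X h ∧ X.nrm (fun x => Ψ |h x|) ≤ M := by
  classical
  obtain ⟨M, hM⟩ := hbdd
  set C : ℝ := max (M + 1) 1 with hCdef
  have hC1 : (1:ℝ) ≤ C := le_max_right _ _
  have hC0 : (0:ℝ) < C := lt_of_lt_of_le one_pos hC1
  have hΦ0 : ∀ t : ℝ, 0 ≤ t → 0 ≤ Φ t := by
    intro t ht
    rcases eq_or_lt_of_le ht with h | h
    · simp [← h, hΦ.map_zero]
    · have := hΦ.strictMono (Set.mem_Ici.mpr le_rfl) (Set.mem_Ici.mpr ht) h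
      rw [hΦ.map_zero] at this
      linarith
  have hscale : ∀ a t : ℝ, 0 ≤ a → a ≤ 1 → 0 ≤ t → Φ (a * t) ≤ a * Φ t := by
    intro a t ha ha1 ht
    have := hΦ.convex.2 (Set.mem_Ici.mpr ht) (Set.mem_Ici.mpr (le_refl (0:ℝ)))
      ha (by linarith : (0:ℝ) ≤ 1 - a) (by ring)
    simpa [hΦ.map_zero, smul_eq_mul] using this
  have hmono := hΦ.strictMono.monotoneOn
  refine ⟨fun t => Φ (t / C), ⟨?_, ?_, ?_, ?_, ?_⟩, 1, ?_⟩
  · -- strict mono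
    intro a ha b hb hab
    exact hΦ.strictMono (Set.mem_Ici.mpr (div_nonneg ha hC0.le))
      (Set.mem_Ici.mpr (div_nonneg hb hC0.le)) (by gcongr)
  · -- continuous
    exact hΦ.continuous.comp ((continuous_id.div_const C).continuousOn)
      (fun t ht => Set.mem_Ici.mpr (div_nonneg ht hC0.le))
  · -- convex
    refine ⟨convex_Ici 0, ?_⟩
    intro x hx y hy a b ha hb hab
    have key := hΦ.convex.2 (Set.mem_Ici.mpr (div_nonneg hx hC0.le))
      (Set.mem_Ici.mpr (div_nonneg hy hC0.le)) ha hb hab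
    have harg : (a • x + b • y) / C = a • (x / C) + b • (y / C) := by
      simp only [smul_eq_mul]; ring
    simp only [smul_eq_mul] at key ⊢
    rw [show (a * x + b * y) / C = a * (x / C) + b * (y / C) by ring]
    exact key
  · simp [hΦ.map_zero]
  · exact hΦ.tendsto_atTop.comp (tendsto_id.atTop_div_const hC0)
  · intro h hh
    obtain ⟨c, hc, hmem⟩ := hH h hh
    set g : α → ℝ := fun x => Φ (|h x| / c) with hg
    obtain ⟨N, hN⟩ := exists_nat_ge (max 1 (X.nrm g))
    have hN1 : (1:ℝ) ≤ N := le_trans (le_max_left _ _) hN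
    have hNnrm : X.nrm g ≤ N := le_trans (le_max_right _ _) hN
    have hN0 : (0:ℝ) < N := lt_of_lt_of_le one_pos hN1
    -- the Luxemburg set is nonempty
    set S := {k : ℝ | 0 < k ∧ X.mem (fun x => Φ (|h x| / k)) ∧
      X.nrm (fun x => Φ (|h x| / k)) ≤ 1} with hSdef
    have hptw : ∀ x, Φ (|h x| / (c * N)) ≤ (1 / N) * g x := by
      intro x
      have : |h x| / (c * N) = (1 / N) * (|h x| / c) := by
        rw [mul_comm (1/(N:ℝ)), mul_one_div, div_div]
      rw [this]
      exact hscale _ _ (by positivity) (by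
        rw [div_le_one hN0]; exact hN1) (div_nonneg (abs_nonneg _) hc.le)
    have hg' : X.mem ((1 / (N:ℝ)) • g) := X.smul_mem _ _ hmem
    have hae : ∀ᵐ x ∂μ, |Φ (|h x| / (c * N))| ≤ |((1 / (N:ℝ)) • g) x| := by
      refine Filter.Eventually.of_forall (fun x => ?_)
      have h1 : 0 ≤ Φ (|h x| / (c * N)) := hΦ0 _ (by positivity)
      have h2 : 0 ≤ (1 / (N:ℝ)) * g x :=
        mul_nonneg (by positivity) (hΦ0 _ (div_nonneg (abs_nonneg _) hc.le))
      rw [abs_of_nonneg h1, Pi.smul_apply, smul_eq_mul, abs_of_nonneg h2]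
      exact hptw x
    have hmemCN : X.mem (fun x => Φ (|h x| / (c * N))) := X.ideal_mem _ _ hg' hae
    have hnrmCN : X.nrm (fun x => Φ (|h x| / (c * N))) ≤ 1 := by
      have := X.ideal_nrm _ _ hmemCN hg' hae
      have hsmul := X.nrm_smul (1 / (N:ℝ)) g hmem
      rw [hsmul, abs_of_nonneg (by positivity : (0:ℝ) ≤ 1 / (N:ℝ))] at this
      calc X.nrm (fun x => Φ (|h x| / (c * N))) ≤ 1 / N * X.nrm g := this
        _ ≤ 1 / N * N := by gcongr
        _ = 1 := by field_simp
    have hSne : S.Nonempty := ⟨c * N, by positivity, hmemCN, hnrmCN⟩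
    have hSbd : BddBelow S := ⟨0, fun k hk => hk.1.le⟩
    have hlux : sInf S ≤ M := hM h hh
    have : sInf S < M + 1 := lt_of_le_of_lt hlux (by linarith)
    obtain ⟨k, hkS, hkM⟩ := exists_lt_of_csInf_lt hSne this
    obtain ⟨hk0, hkmem, hknrm⟩ := hkS
    have hkC : k ≤ C := le_trans hkM.le (le_max_left _ _)
    have haeC : ∀ᵐ x ∂μ, |Φ (|h x| / C)| ≤ |Φ (|h x| / k)| := by
      refine Filter.Eventually.of_forall (fun x => ?_)
      have hle : |h x| / C ≤ |h x| / k := by gcongr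
      have := hmono (Set.mem_Ici.mpr (div_nonneg (abs_nonneg _) hC0.le))
        (Set.mem_Ici.mpr (div_nonneg (abs_nonneg _) hk0.le)) hle
      rw [abs_of_nonneg (hΦ0 _ (div_nonneg (abs_nonneg _) hC0.le)),
        abs_of_nonneg (hΦ0 _ (div_nonneg (abs_nonneg _) hk0.le))]
      exact this
    have hmemC : X.mem (fun x => Φ (|h x| / C)) := X.ideal_mem _ _ hkmem haeC
    exact ⟨hmemC, le_trans (X.ideal_nrm _ _ hmemC hkmem haeC) hknrm⟩
end

section
/- Let Φ be a Young function and X a quasi-Banach function space over μ with the σ-Fatou property. Then the Orlicz space X^Φ with the Luxemburg quasi-norm also has the σ-Fatou property. -/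
open MeasureTheory Filter Set

variable {α : Type*} [MeasurableSpace α]

/-- The σ-Fatou property of a (quasi-normed) function space given by a
membership predicate and a quasi-norm. -/
def SigmaFatou (mem : (α → ℝ) → Prop) (N : (α → ℝ) → ℝ)
    (μ' : MeasureTheory.Measure α) : Prop :=
  ∀ (f : ℕ → α → ℝ) (g : α → ℝ),
    (∀ n, mem (f n)) →
    (∀ n, ∀ᵐ x ∂μ', 0 ≤ f n x) →
    (∀ n, ∀ᵐ x ∂μ', f n x ≤ f (n + 1) x) →
    BddAbove (Set.range fun n => N (f n)) →
    (∀ᵐ x ∂μ', Filter.Tendsto (fun n => f n x) Filter.atTop (nhds (g x))) →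
    mem g ∧ N g = ⨆ n, N (f n)

/- ### Auxiliary lemmas -/

lemma young_mono {Φ : ℝ → ℝ} (hΦ : IsYoung Φ) {a b : ℝ} (ha : 0 ≤ a) (hab : a ≤ b) :
    Φ a ≤ Φ b := hΦ.strictMono.monotoneOn ha (ha.trans hab) hab

lemma young_nonneg {Φ : ℝ → ℝ} (hΦ : IsYoung Φ) {t : ℝ} (ht : 0 ≤ t) : 0 ≤ Φ t := by
  have := young_mono hΦ (le_refl 0) ht
  simpa [hΦ.map_zero] using this

lemma young_scale {Φ : ℝ → ℝ} (hΦ : IsYoung Φ) {t lam : ℝ} (ht : 0 ≤ t) (hl : 1 ≤ lam) :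
    Φ (t / lam) ≤ Φ t / lam := by
  have hl0 : 0 < lam := lt_of_lt_of_le one_pos hl
  have h1 : (0:ℝ) ≤ 1/lam := by positivity
  have h2 : (0:ℝ) ≤ 1 - 1/lam := by
    have : 1/lam ≤ 1 := by
      rw [div_le_one hl0]; exact hl
    linarith
  have := hΦ.convex.2 (Set.mem_Ici.mpr ht) Set.self_mem_Ici h1 h2 (by ring)
  simp only [smul_eq_mul, mul_zero, add_zero, hΦ.map_zero] at this
  calc Φ (t/lam) = Φ (1/lam * t) := by rw [one_div, inv_mul_eq_div]
    _ ≤ 1/lam * Φ t := by simpa using this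
    _ = Φ t / lam := by rw [one_div, inv_mul_eq_div]

/-- The admissible set defining the Luxemburg quasi-norm. -/
def adm {μ : Measure α} {K : ℝ} (Φ : ℝ → ℝ) (X : QNFS μ K) (f : α → ℝ) : Set ℝ :=
  {k : ℝ | 0 < k ∧ X.mem (fun x => Φ (|f x| / k)) ∧
    X.nrm (fun x => Φ (|f x| / k)) ≤ 1}

lemma lux_eq_sInf_adm {μ : Measure α} {K : ℝ} (Φ : ℝ → ℝ) (X : QNFS μ K) (f : α → ℝ) :
    lux Φ X f = sInf (adm Φ X f) := rfl

lemma bddBelow_adm {μ : Measure α} {K : ℝ} (Φ : ℝ → ℝ) (X : QNFS μ K) (f : α → ℝ) :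
    BddBelow (adm Φ X f) := ⟨0, fun _ hk => le_of_lt hk.1⟩

lemma adm_upward {μ : Measure α} {K : ℝ} {Φ : ℝ → ℝ} (hΦ : IsYoung Φ) {X : QNFS μ K}
    {f : α → ℝ} {k k' : ℝ} (hk : k ∈ adm Φ X f) (hkk : k ≤ k') : k' ∈ adm Φ X f := by
  have hk0 : 0 < k := hk.1
  have hk'0 : 0 < k' := lt_of_lt_of_le hk0 hkk
  have hpt : ∀ x, |Φ (|f x| / k')| ≤ |Φ (|f x| / k)| := by
    intro x
    have h1 : (0:ℝ) ≤ |f x| / k' := by positivity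
    have h2 : |f x| / k' ≤ |f x| / k := by gcongr
    rw [abs_of_nonneg (young_nonneg hΦ h1),
      abs_of_nonneg (young_nonneg hΦ (by positivity))]
    exact young_mono hΦ h1 h2
  have hmem := X.ideal_mem _ _ hk.2.1 (Eventually.of_forall hpt)
  exact ⟨hk'0, hmem,
    le_trans (X.ideal_nrm _ _ hmem hk.2.1 (Eventually.of_forall hpt)) hk.2.2⟩

lemma adm_nonempty {μ : Measure α} {K : ℝ} {Φ : ℝ → ℝ} (hΦ : IsYoung Φ) {X : QNFS μ K}
    {f : α → ℝ} (hf : memOrlicz Φ X f) : (adm Φ X f).Nonempty := by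
  obtain ⟨c, hc, hmem⟩ := hf
  set lam : ℝ := max 1 (X.nrm (fun x => Φ (|f x| / c))) with hlam
  have hl1 : (1:ℝ) ≤ lam := le_max_left _ _
  have hl0 : (0:ℝ) < lam := lt_of_lt_of_le one_pos hl1
  have hmemG := X.smul_mem (1/lam) _ hmem
  have hpt : ∀ x, |Φ (|f x| / (lam * c))|
      ≤ |((1/lam) • fun x => Φ (|f x| / c)) x| := by
    intro x
    have h1 : (0:ℝ) ≤ |f x| / (lam * c) := by positivity
    have heq : |f x| / (lam * c) = (|f x| / c) / lam := by
      rw [div_div]; ring_nf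
    have hle : Φ (|f x| / (lam * c)) ≤ Φ (|f x| / c) / lam := by
      rw [heq]; exact young_scale hΦ (by positivity) hl1
    have h2 : (0:ℝ) ≤ Φ (|f x| / c) / lam :=
      div_nonneg (young_nonneg hΦ (by positivity)) hl0.le
    simp only [Pi.smul_apply, smul_eq_mul]
    rw [abs_of_nonneg (young_nonneg hΦ h1),
      abs_of_nonneg (mul_nonneg (by positivity : (0:ℝ) ≤ 1/lam)
        (young_nonneg hΦ (by positivity : (0:ℝ) ≤ |f x| / c)))]
    rw [one_div, inv_mul_eq_div]
    exact hle
  have hmemk := X.ideal_mem _ _ hmemG (Eventually.of_forall hpt)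
  refine ⟨lam * c, mul_pos hl0 hc, hmemk, ?_⟩
  calc X.nrm (fun x => Φ (|f x| / (lam * c)))
      ≤ X.nrm ((1/lam) • fun x => Φ (|f x| / c)) :=
        X.ideal_nrm _ _ hmemk hmemG (Eventually.of_forall hpt)
    _ = |1/lam| * X.nrm (fun x => Φ (|f x| / c)) := X.nrm_smul _ _ hmem
    _ ≤ 1 := by
        rw [abs_of_nonneg (by positivity), one_div, inv_mul_eq_div, div_le_one hl0]
        exact le_max_right _ _

lemma adm_antitone {μ : Measure α} {K : ℝ} {Φ : ℝ → ℝ} (hΦ : IsYoung Φ) {X : QNFS μ K}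
    {f g : α → ℝ} (hle : ∀ᵐ x ∂μ, |f x| ≤ |g x|) : adm Φ X g ⊆ adm Φ X f := by
  intro k hk
  have hk0 : 0 < k := hk.1
  have hpt : ∀ᵐ x ∂μ, |Φ (|f x| / k)| ≤ |Φ (|g x| / k)| := by
    filter_upwards [hle] with x hx
    have h1 : (0:ℝ) ≤ |f x| / k := by positivity
    have h2 : |f x| / k ≤ |g x| / k := by gcongr
    rw [abs_of_nonneg (young_nonneg hΦ h1),
      abs_of_nonneg (young_nonneg hΦ (by positivity))]
    exact young_mono hΦ h1 h2
  have hmem := X.ideal_mem _ _ hk.2.1 hpt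
  exact ⟨hk0, hmem, le_trans (X.ideal_nrm _ _ hmem hk.2.1 hpt) hk.2.2⟩

/-- If `X` has the σ-Fatou property, then so does the Orlicz space `X^Φ`
with the Luxemburg quasi-norm. -/
theorem stmt_16 {μ : Measure α} [IsFiniteMeasure μ] {K : ℝ}
    (Φ : ℝ → ℝ) (hΦ : IsYoung Φ) (X : QNFS μ K)
    (hFatou : SigmaFatou X.mem X.nrm μ) :
    SigmaFatou (memOrlicz Φ X) (lux Φ X) μ := by
  intro f g hmemn hnn hmono hbdd htend
  set L : ℝ := ⨆ n, lux Φ X (f n) with hLdef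
  have hne : ∀ n, (adm Φ X (f n)).Nonempty := fun n => adm_nonempty hΦ (hmemn n)
  have hluxnn : ∀ n, 0 ≤ lux Φ X (f n) := fun n =>
    Real.sInf_nonneg (fun k hk => le_of_lt hk.1)
  have hlen : ∀ n, lux Φ X (f n) ≤ L := fun n => le_ciSup hbdd n
  have hL0 : 0 ≤ L := (hluxnn 0).trans (hlen 0)
  have hae : ∀ᵐ x ∂μ, (∀ n, 0 ≤ f n x) ∧ (∀ n, f n x ≤ f (n+1) x) ∧
      Tendsto (fun n => f n x) atTop (nhds (g x)) :=
    ((ae_all_iff.mpr hnn).and ((ae_all_iff.mpr hmono).and htend))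
  -- every k > L is admissible for g
  have key : ∀ k : ℝ, L < k → k ∈ adm Φ X g := by
    intro k hkL
    have hk0 : 0 < k := lt_of_le_of_lt hL0 hkL
    have hadm : ∀ n, k ∈ adm Φ X (f n) := by
      intro n
      obtain ⟨k', hk', hk'k⟩ := exists_lt_of_csInf_lt (hne n)
        (lt_of_le_of_lt (hlen n) hkL)
      exact adm_upward hΦ hk' hk'k.le
    have main := hFatou (fun n x => Φ (|f n x| / k)) (fun x => Φ (|g x| / k))
      (fun n => (hadm n).2.1)
      (fun n => Eventually.of_forall fun x => young_nonneg hΦ (by positivity))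
      (fun n => by
        filter_upwards [hnn n, hnn (n+1), hmono n] with x ha hb hc
        have habs : |f n x| ≤ |f (n+1) x| := by
          rw [abs_of_nonneg ha, abs_of_nonneg hb]; exact hc
        exact young_mono hΦ (by positivity) (by gcongr))
      (by
        refine ⟨1, ?_⟩
        rintro y ⟨n, rfl⟩
        exact (hadm n).2.2)
      (by
        filter_upwards [hae] with x hx
        obtain ⟨h1, h2, h3⟩ := hx
        have hdiv : Tendsto (fun n => |f n x| / k) atTop (nhds (|g x| / k)) := by
          have hg0 : 0 ≤ g x :=
            ge_of_tendsto h3 (Eventually.of_forall fun n => h1 n)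
          have ht : Tendsto (fun n => f n x / k) atTop (nhds (g x / k)) :=
            h3.div_const k
          rw [abs_of_nonneg hg0]
          exact ht.congr fun n => by rw [abs_of_nonneg (h1 n)]
        have hcont : ContinuousWithinAt Φ (Set.Ici 0) (|g x| / k) :=
          hΦ.continuous _ (Set.mem_Ici.mpr (by positivity))
        exact hcont.tendsto.comp
          (tendsto_nhdsWithin_of_tendsto_nhds_of_eventually_within _ hdiv
            (Eventually.of_forall fun n => Set.mem_Ici.mpr (by positivity))))
    refine ⟨hk0, main.1, ?_⟩
    rw [main.2]
    exact ciSup_le fun n => (hadm n).2.2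
  have hgadm : (L + 1) ∈ adm Φ X g := key (L + 1) (by linarith)
  have hAgne : (adm Φ X g).Nonempty := ⟨L + 1, hgadm⟩
  constructor
  · exact ⟨L + 1, by linarith, hgadm.2.1⟩
  · rw [lux_eq_sInf_adm]
    refine le_antisymm ?_ ?_
    · refine le_of_forall_pos_le_add fun ε hε => ?_
      exact csInf_le (bddBelow_adm Φ X g) (key (L + ε) (by linarith))
    · refine ciSup_le fun n => ?_
      have hle : ∀ᵐ x ∂μ, |f n x| ≤ |g x| := by
        filter_upwards [hae] with x hx
        obtain ⟨h1, h2, h3⟩ := hx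
        have hm : Monotone fun m => f m x := monotone_nat_of_le_succ h2
        have hfg : f n x ≤ g x :=
          ge_of_tendsto h3 (eventually_atTop.mpr ⟨n, fun m hm' => hm hm'⟩)
        rw [abs_of_nonneg (h1 n), abs_of_nonneg (le_trans (h1 n) hfg)]
        exact hfg
      exact csInf_le_csInf (bddBelow_adm Φ X (f n)) hAgne (adm_antitone hΦ hle)
end

section
/- Let X be a quasi-normed function space over μ and Φ ∈ Δ₂ a Young function. For a sequence (f_n) in X^Φ, one has ‖f_n‖_{X^Φ} → 0 if and only if ‖Φ(|f_n|)‖_X → 0. Moreover, if X is σ-order continuous then X^Φ is σ-order continuous. -/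
open MeasureTheory Filter Set

variable {α : Type*} [MeasurableSpace α]

/-- σ-order continuity of a (quasi-normed) function space: for every positive
increasing sequence converging a.e. to a member `g`, `‖g - fₙ‖ → 0`. -/
def SigmaOrderCont (mem : (α → ℝ) → Prop) (N : (α → ℝ) → ℝ)
    (μ' : MeasureTheory.Measure α) : Prop :=
  ∀ (f : ℕ → α → ℝ) (g : α → ℝ),
    (∀ n, mem (f n)) → mem g →
    (∀ n, ∀ᵐ x ∂μ', 0 ≤ f n x) →
    (∀ n, ∀ᵐ x ∂μ', f n x ≤ f (n + 1) x) →
    (∀ᵐ x ∂μ', Filter.Tendsto (fun n => f n x) Filter.atTop (nhds (g x))) →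
    Filter.Tendsto (fun n => N (g - f n)) Filter.atTop (nhds 0)

/-- If `Φ ∈ Δ₂`, then `‖fₙ‖_{X^Φ} → 0` iff `‖Φ(|fₙ|)‖_X → 0`; and if `X` is
σ-order continuous, then so is `X^Φ`. -/
theorem stmt_18 {μ : Measure α} [IsFiniteMeasure μ] {K : ℝ}
    (Φ : ℝ → ℝ) (hΦ : IsYoung Φ)
    (hΔ₂ : ∃ C : ℝ, 1 < C ∧ ∀ t : ℝ, 0 ≤ t → Φ (2 * t) ≤ C * Φ t)
    (X : QNFS μ K) :
    (∀ f : ℕ → α → ℝ, (∀ n, memOrlicz Φ X (f n)) →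
      (Filter.Tendsto (fun n => lux Φ X (f n)) Filter.atTop (nhds 0) ↔
        Filter.Tendsto (fun n => X.nrm fun x => Φ |f n x|) Filter.atTop (nhds 0))) ∧
    (SigmaOrderCont X.mem X.nrm μ →
      SigmaOrderCont (memOrlicz Φ X) (lux Φ X) μ) := by
  obtain ⟨C, hC1, hC2⟩ := hΔ₂
  have hC0 : (0:ℝ) < C := one_pos.trans hC1
  have hmono : MonotoneOn Φ (Set.Ici 0) := hΦ.strictMono.monotoneOn
  have hnn : ∀ t : ℝ, 0 ≤ t → 0 ≤ Φ t := by
    intro t ht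
    have := hmono (Set.mem_Ici.mpr le_rfl) (Set.mem_Ici.mpr ht) ht
    rwa [hΦ.map_zero] at this
  have hscale : ∀ t : ℝ, 0 ≤ t → ∀ a : ℝ, 0 ≤ a → a ≤ 1 → Φ (a * t) ≤ a * Φ t := by
    intro t ht a ha0 ha1
    have := hΦ.convex.2 (Set.mem_Ici.mpr ht) (Set.mem_Ici.mpr (le_refl (0:ℝ))) ha0
      (by linarith : (0:ℝ) ≤ 1 - a) (by ring)
    simpa [hΦ.map_zero, smul_eq_mul] using this
  have hpow : ∀ m : ℕ, ∀ t : ℝ, 0 ≤ t → Φ (2 ^ m * t) ≤ C ^ m * Φ t := by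
    intro m
    induction m with
    | zero => intro t ht; simp
    | succ m ih =>
      intro t ht
      calc Φ (2 ^ (m+1) * t) = Φ (2 * (2 ^ m * t)) := by ring_nf
        _ ≤ C * Φ (2 ^ m * t) := hC2 _ (by positivity)
        _ ≤ C * (C ^ m * Φ t) := mul_le_mul_of_nonneg_left (ih t ht) hC0.le
        _ = C ^ (m+1) * Φ t := by ring
  -- Δ₂ : Orlicz space = Orlicz class
  have hclass : ∀ h : α → ℝ, memOrlicz Φ X h → X.mem (fun x => Φ |h x|) := by
    rintro h ⟨c, hc, hmem⟩
    obtain ⟨m, hm⟩ := pow_unbounded_of_one_lt c (one_lt_two (α := ℝ))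
    refine X.ideal_mem _ ((C ^ m) • fun x => Φ (|h x| / c)) (X.smul_mem _ _ hmem) ?_
    refine Filter.Eventually.of_forall fun x => ?_
    have hs0 : 0 ≤ |h x| / c := by positivity
    have key : Φ |h x| ≤ C ^ m * Φ (|h x| / c) := by
      have e1 : |h x| = c * (|h x| / c) := by field_simp
      calc Φ |h x| = Φ (c * (|h x| / c)) := by rw [← e1]
        _ ≤ Φ (2 ^ m * (|h x| / c)) :=
            hmono (Set.mem_Ici.mpr (by positivity)) (Set.mem_Ici.mpr (by positivity))
              (mul_le_mul_of_nonneg_right hm.le hs0)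
        _ ≤ C ^ m * Φ (|h x| / c) := hpow m _ hs0
    rw [abs_of_nonneg (hnn _ (abs_nonneg _)), Pi.smul_apply, smul_eq_mul,
      abs_of_nonneg (mul_nonneg (by positivity) (hnn _ (by positivity)))]
    exact key
  -- the Luxemburg set is nonempty for members of the Orlicz space
  have hSne : ∀ h : α → ℝ, memOrlicz Φ X h → ∃ k : ℝ, 0 < k ∧
      X.mem (fun x => Φ (|h x| / k)) ∧ X.nrm (fun x => Φ (|h x| / k)) ≤ 1 := by
    rintro h ⟨c, hc, hmem⟩
    set M : ℝ := max 1 (X.nrm fun x => Φ (|h x| / c)) with hM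
    have hM1 : (1:ℝ) ≤ M := le_max_left _ _
    have hM0 : (0:ℝ) < M := lt_of_lt_of_le one_pos hM1
    have hbd : ∀ x, Φ (|h x| / (M * c)) ≤ (1 / M) * Φ (|h x| / c) := by
      intro x
      have e : |h x| / (M * c) = (1 / M) * (|h x| / c) := by
        field_simp
      rw [e]
      exact hscale _ (by positivity) _ (by positivity) (by
        rw [div_le_one hM0]; exact hM1)
    have hmem2 : X.mem (fun x => Φ (|h x| / (M * c))) := by
      refine X.ideal_mem _ ((1 / M) • fun x => Φ (|h x| / c)) (X.smul_mem _ _ hmem) ?_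
      refine Filter.Eventually.of_forall fun x => ?_
      rw [abs_of_nonneg (hnn _ (by positivity)), Pi.smul_apply, smul_eq_mul,
        abs_of_nonneg (mul_nonneg (by positivity) (hnn _ (by positivity)))]
      exact hbd x
    refine ⟨M * c, by positivity, hmem2, ?_⟩
    have h1 : X.nrm (fun x => Φ (|h x| / (M * c))) ≤
        X.nrm ((1 / M) • fun x => Φ (|h x| / c)) := by
      refine X.ideal_nrm _ _ hmem2 (X.smul_mem _ _ hmem) ?_
      refine Filter.Eventually.of_forall fun x => ?_
      rw [abs_of_nonneg (hnn _ (by positivity)), Pi.smul_apply, smul_eq_mul,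
        abs_of_nonneg (mul_nonneg (by positivity) (hnn _ (by positivity)))]
      exact hbd x
    rw [X.nrm_smul _ _ hmem, abs_of_nonneg (by positivity : (0:ℝ) ≤ 1 / M)] at h1
    refine h1.trans ?_
    rw [div_mul_eq_mul_div, one_mul, div_le_one hM0]
    exact le_max_right _ _
  have hlux0 : ∀ h : α → ℝ, 0 ≤ lux Φ X h := by
    intro h
    exact Real.sInf_nonneg fun k hk => hk.1.le
  -- Part 1
  have part1 : ∀ f : ℕ → α → ℝ, (∀ n, memOrlicz Φ X (f n)) →
      (Filter.Tendsto (fun n => lux Φ X (f n)) Filter.atTop (nhds 0) ↔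
        Filter.Tendsto (fun n => X.nrm fun x => Φ |f n x|) Filter.atTop (nhds 0)) := by
    intro f hf
    constructor
    · intro hlim
      rw [Metric.tendsto_atTop] at hlim ⊢
      intro ε hε
      obtain ⟨N, hN⟩ := hlim (min ε 1) (lt_min hε one_pos)
      refine ⟨N, fun n hn => ?_⟩
      have h1 : lux Φ X (f n) < min ε 1 := by
        have := hN n hn
        rwa [Real.dist_eq, sub_zero, abs_of_nonneg (hlux0 _)] at this
      have hne : {k : ℝ | 0 < k ∧ X.mem (fun x => Φ (|f n x| / k)) ∧
          X.nrm (fun x => Φ (|f n x| / k)) ≤ 1}.Nonempty := by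
        obtain ⟨k, hk1, hk2, hk3⟩ := hSne (f n) (hf n)
        exact ⟨k, hk1, hk2, hk3⟩
      rw [lux] at h1
      obtain ⟨k, hkS, hklt⟩ := exists_lt_of_csInf_lt hne h1
      obtain ⟨hk0, hkmem, hknrm⟩ := hkS
      have hk1 : k ≤ 1 := (hklt.le.trans (min_le_right _ _))
      have hbd : ∀ x, Φ |f n x| ≤ k * Φ (|f n x| / k) := by
        intro x
        have e : |f n x| = k * (|f n x| / k) := by field_simp
        calc Φ |f n x| = Φ (k * (|f n x| / k)) := by rw [← e]
          _ ≤ k * Φ (|f n x| / k) := hscale _ (by positivity) _ hk0.le hk1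
      have hbd' : ∀ᵐ x ∂μ, |Φ (|f n x|)| ≤ |(k • fun x => Φ (|f n x| / k)) x| := by
        refine Filter.Eventually.of_forall fun x => ?_
        rw [abs_of_nonneg (hnn _ (abs_nonneg _)), Pi.smul_apply, smul_eq_mul,
          abs_of_nonneg (mul_nonneg hk0.le (hnn _ (by positivity)))]
        exact hbd x
      have hmemf : X.mem (fun x => Φ |f n x|) :=
        X.ideal_mem _ _ (X.smul_mem k _ hkmem) hbd'
      have hle : X.nrm (fun x => Φ |f n x|) ≤ k := by
        have := X.ideal_nrm _ _ hmemf (X.smul_mem k _ hkmem) hbd'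
        rw [X.nrm_smul _ _ hkmem, abs_of_nonneg hk0.le] at this
        calc X.nrm (fun x => Φ |f n x|) ≤ k * X.nrm (fun x => Φ (|f n x| / k)) := this
          _ ≤ k * 1 := mul_le_mul_of_nonneg_left hknrm hk0.le
          _ = k := mul_one k
      rw [Real.dist_eq, sub_zero, abs_of_nonneg (X.nrm_nonneg _)]
      exact lt_of_le_of_lt hle (lt_of_lt_of_le hklt (min_le_left _ _))
    · intro hlim
      rw [Metric.tendsto_atTop] at hlim ⊢
      intro ε hε
      obtain ⟨m, hm⟩ := pow_unbounded_of_one_lt (2 / ε) (one_lt_two (α := ℝ))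
      have hCm : (0:ℝ) < C ^ m := by positivity
      obtain ⟨N, hN⟩ := hlim (1 / C ^ m) (by positivity)
      refine ⟨N, fun n hn => ?_⟩
      have hnrm : X.nrm (fun x => Φ |f n x|) < 1 / C ^ m := by
        have := hN n hn
        rwa [Real.dist_eq, sub_zero, abs_of_nonneg (X.nrm_nonneg _)] at this
      have hmemf : X.mem (fun x => Φ |f n x|) := hclass (f n) (hf n)
      set k : ℝ := ε / 2 with hk
      have hk0 : (0:ℝ) < k := by positivity
      have hbd : ∀ x, Φ (|f n x| / k) ≤ C ^ m * Φ |f n x| := by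
        intro x
        have e : |f n x| / k = (2 / ε) * |f n x| := by
          rw [hk]; field_simp
        calc Φ (|f n x| / k) = Φ ((2 / ε) * |f n x|) := by rw [e]
          _ ≤ Φ (2 ^ m * |f n x|) :=
              hmono (Set.mem_Ici.mpr (by positivity)) (Set.mem_Ici.mpr (by positivity))
                (mul_le_mul_of_nonneg_right hm.le (abs_nonneg _))
          _ ≤ C ^ m * Φ |f n x| := hpow m _ (abs_nonneg _)
      have hbd' : ∀ᵐ x ∂μ, |Φ (|f n x| / k)| ≤ |((C ^ m) • fun x => Φ |f n x|) x| := by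
        refine Filter.Eventually.of_forall fun x => ?_
        rw [abs_of_nonneg (hnn _ (by positivity)), Pi.smul_apply, smul_eq_mul,
          abs_of_nonneg (mul_nonneg hCm.le (hnn _ (abs_nonneg _)))]
        exact hbd x
      have hmemk : X.mem (fun x => Φ (|f n x| / k)) :=
        X.ideal_mem _ _ (X.smul_mem _ _ hmemf) hbd'
      have hnrmk : X.nrm (fun x => Φ (|f n x| / k)) ≤ 1 := by
        have := X.ideal_nrm _ _ hmemk (X.smul_mem _ _ hmemf) hbd'
        rw [X.nrm_smul _ _ hmemf, abs_of_nonneg hCm.le] at this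
        refine this.trans ?_
        calc C ^ m * X.nrm (fun x => Φ |f n x|) ≤ C ^ m * (1 / C ^ m) :=
              mul_le_mul_of_nonneg_left hnrm.le hCm.le
          _ = 1 := by field_simp
      have hluxle : lux Φ X (f n) ≤ k := by
        rw [lux]
        exact csInf_le ⟨0, fun x hx => hx.1.le⟩ ⟨hk0, hmemk, hnrmk⟩
      rw [Real.dist_eq, sub_zero, abs_of_nonneg (hlux0 _)]
      calc lux Φ X (f n) ≤ k := hluxle
        _ < ε := by rw [hk]; linarith
  refine ⟨part1, ?_⟩
  -- Part 2
  intro hX f g hfmem hgmem hpos hmon htend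
  have hae : ∀ᵐ x ∂μ, (∀ n, 0 ≤ f n x) ∧ (∀ n, f n x ≤ f (n+1) x) ∧
      Tendsto (fun n => f n x) atTop (nhds (g x)) :=
    (ae_all_iff.mpr hpos).and ((ae_all_iff.mpr hmon).and htend)
  have haux : ∀ᵐ x ∂μ, (∀ n m : ℕ, n ≤ m → f n x ≤ f m x) ∧ (∀ n, 0 ≤ f n x) ∧
      (∀ n, f n x ≤ g x) ∧ Tendsto (fun n => f n x) atTop (nhds (g x)) := by
    filter_upwards [hae] with x hx
    obtain ⟨h1, h2, h3⟩ := hx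
    have hmx : Monotone fun n => f n x := monotone_nat_of_le_succ h2
    exact ⟨fun n m hnm => hmx hnm, h1,
      fun n => ge_of_tendsto h3 (Filter.eventually_atTop.mpr ⟨n, fun m hm' => hmx hm'⟩), h3⟩
  have hgX : X.mem (fun x => Φ |g x|) := hclass g hgmem
  have hub : ∀ᵐ x ∂μ, ∀ n, |Φ (|g x - f n x|)| ≤ |Φ (|g x|)| := by
    filter_upwards [haux] with x hx n
    obtain ⟨hmx, h0, hg, ht⟩ := hx
    have h1 : 0 ≤ g x - f n x := sub_nonneg.mpr (hg n)
    have h2 : |g x - f n x| ≤ |g x| := by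
      rw [abs_of_nonneg h1, abs_of_nonneg ((h0 n).trans (hg n))]
      linarith [h0 n]
    rw [abs_of_nonneg (hnn _ (abs_nonneg _)), abs_of_nonneg (hnn _ (abs_nonneg _))]
    exact hmono (Set.mem_Ici.mpr (abs_nonneg _)) (Set.mem_Ici.mpr (abs_nonneg _)) h2
  have humem : ∀ n, X.mem (fun x => Φ |g x - f n x|) := fun n =>
    X.ideal_mem _ _ hgX (hub.mono fun x hx => hx n)
  have hgfmem : ∀ n, memOrlicz Φ X (g - f n) := by
    intro n
    refine ⟨1, one_pos, ?_⟩
    refine X.ideal_mem _ _ hgX ?_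
    filter_upwards [hub] with x hx
    simpa [Pi.sub_apply, div_one] using hx n
  rw [part1 (fun n => g - f n) hgfmem]
  -- decreasingness of Φ |g - f n|
  have hdec : ∀ᵐ x ∂μ, ∀ n m : ℕ, n ≤ m → Φ |g x - f m x| ≤ Φ |g x - f n x| := by
    filter_upwards [haux] with x hx n m hnm
    obtain ⟨hmx, h0, hg, ht⟩ := hx
    have h1 : 0 ≤ g x - f m x := sub_nonneg.mpr (hg m)
    have h1' : 0 ≤ g x - f n x := sub_nonneg.mpr (hg n)
    have h2 : g x - f m x ≤ g x - f n x := by linarith [hmx n m hnm]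
    rw [abs_of_nonneg h1, abs_of_nonneg h1']
    exact hmono (Set.mem_Ici.mpr h1) (Set.mem_Ici.mpr h1') h2
  have htend0 : ∀ᵐ x ∂μ, Tendsto (fun n => Φ |g x - f n x|) atTop (nhds 0) := by
    filter_upwards [haux] with x hx
    obtain ⟨hmx, h0, hg, ht⟩ := hx
    have h1 : Tendsto (fun n => g x - f n x) atTop (nhds 0) := by
      have := tendsto_const_nhds (x := g x) (f := (atTop : Filter ℕ)) |>.sub ht
      simpa using this
    have h2 : Tendsto (fun n => g x - f n x) atTop (nhdsWithin 0 (Set.Ici 0)) :=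
      tendsto_nhdsWithin_of_tendsto_nhds_of_eventually_within _ h1
        (Filter.Eventually.of_forall fun n => Set.mem_Ici.mpr (sub_nonneg.mpr (hg n)))
    have h3 : ContinuousWithinAt Φ (Set.Ici 0) 0 := hΦ.continuous 0 (Set.mem_Ici.mpr le_rfl)
    have h4 : Tendsto (fun n => Φ (g x - f n x)) atTop (nhds (Φ 0)) := h3.tendsto.comp h2
    have h5 : (fun n => Φ |g x - f n x|) = fun n => Φ (g x - f n x) := by
      funext n
      rw [abs_of_nonneg (sub_nonneg.mpr (hg n))]
    rw [h5, ← hΦ.map_zero]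
    exact h4
  have hmem' : ∀ n, X.mem (fun x => Φ |g x - f 0 x| - Φ |g x - f n x|) := by
    intro n
    have h := X.add_mem (fun x => Φ |g x - f 0 x|) ((-1 : ℝ) • fun x => Φ |g x - f n x|)
      (humem 0) (X.smul_mem _ _ (humem n))
    have e : ((fun x => Φ |g x - f 0 x|) + (-1 : ℝ) • fun x => Φ |g x - f n x|) =
        fun x => Φ |g x - f 0 x| - Φ |g x - f n x| := by
      funext x
      simp [Pi.add_apply, Pi.smul_apply]
      ring
    rwa [e] at h
  have key := hX (fun n => fun x => Φ |g x - f 0 x| - Φ |g x - f n x|)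
    (fun x => Φ |g x - f 0 x|) hmem' (humem 0)
    (fun n => (hdec.mono fun x hx => sub_nonneg.mpr (hx 0 n (Nat.zero_le n))))
    (fun n => (hdec.mono fun x hx => by
      have := hx n (n+1) (Nat.le_succ n)
      linarith))
    (by
      filter_upwards [htend0] with x hx
      have := (tendsto_const_nhds (x := Φ |g x - f 0 x|) (f := (atTop : Filter ℕ))).sub hx
      simpa using this)
  have e2 : (fun n => X.nrm ((fun x => Φ |g x - f 0 x|) -
      fun x => Φ |g x - f 0 x| - Φ |g x - f n x|)) =
      fun n => X.nrm fun x => Φ |(g - f n) x| := by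
    funext n
    congr 1
    funext x
    simp [Pi.sub_apply]
  rwa [e2] at key
end
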